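/- arXiv:2310.16779 — 5 statements merged into one kernel-verified Lean document; each statement's English description precedes it below -/
import Mathlib

section
/- Let h : ℝ^d → [0,1] be measurable, let σ > 0, and define the Gaussian-smoothed function p(x) := ∫ h(x + δ) dN(0, σ²I)(δ). Then the map x ↦ σ·Φ⁻¹(p(x)) is 1-Lipschitz with respect to the Euclidean norm: for all x, x' ∈ ℝ^d with p(x), p(x') ∈ (0,1), one has σ·|Φ⁻¹(p(x)) − Φ⁻¹(p(x'))| ≤ ‖x − x'‖. -/
open MeasureTheory ProbabilityTheory

/-- The standard Gaussian CDF `Φ`. -/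
noncomputable def stdGaussianCDF (a : ℝ) : ℝ :=
  ((gaussianReal 0 1) (Set.Iic a)).toReal

/-- The inverse `Φ⁻¹` of the standard Gaussian CDF (on `(0,1)`). -/
noncomputable def stdGaussianCDFInv (p : ℝ) : ℝ :=
  sSup {a : ℝ | stdGaussianCDF a ≤ p}

/-- The Gaussian measure `N(0, σ²I)` on `ℝ^d` (with the Euclidean norm), obtained as the
`d`-fold product of the real Gaussian measure with mean `0` and variance `σ²`. -/
noncomputable def gaussianE (d : ℕ) (σ : ℝ) : Measure (EuclideanSpace ℝ (Fin d)) :=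
  (Measure.pi fun _ : Fin d => gaussianReal 0 ⟨σ ^ 2, sq_nonneg σ⟩).map
    (MeasurableEquiv.toLp 2 (Fin d → ℝ))

/-!
Shifting `N(0, σ²I)` by `v` reweights it by the likelihood ratio
`ρ δ = exp ((⟪v, δ⟫ - ‖v‖² / 2) / σ²)` (Cameron–Martin), an increasing function of `⟪v, δ⟫`.
By the Neyman–Pearson lemma, among all `[0,1]`-valued `g` with `∫ g = p x`, the weighted integral
`∫ ρ g = p (x + v)` is smallest for the indicator of the half-space `{δ | ⟪v, δ⟫ ≤ c}` of the same
mass. Since `⟪v, δ⟫ ∼ N(0, σ²‖v‖²)`, that half-space has mass `Φ (c / (σ‖v‖))` and its shift by `v`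
has mass `Φ (c / (σ‖v‖) - ‖v‖ / σ)`, so `Φ (Φ⁻¹ (p x) - ‖v‖ / σ) ≤ p (x + v)`. Exchanging the two
points gives the Lipschitz bound.
-/
open Real Set
open scoped NNReal ENNReal RealInnerProductSpace

lemma stdGaussianCDF_eq_cdf : stdGaussianCDF = cdf (gaussianReal 0 1) := by
  ext a
  rw [cdf_eq_real]
  rfl

lemma ProbabilityTheory.continuous_cdf (μ : Measure ℝ) [IsProbabilityMeasure μ]
    [NullSingletonClass μ] : Continuous (cdf μ) := by
  refine continuous_iff_continuousAt.2 fun a => ?_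
  rw [(cdf μ).mono.continuousAt_iff_leftLim_eq_rightLim, StieltjesFunction.rightLim_eq]
  have h := (cdf μ).measure_singleton a
  rw [measure_cdf, measure_singleton, eq_comm, ENNReal.ofReal_eq_zero] at h
  exact le_antisymm ((cdf μ).mono.leftLim_le le_rfl) (by linarith)

lemma continuous_stdGaussianCDF : Continuous stdGaussianCDF := by
  have := nullSingletonClass_gaussianReal (μ := 0) one_ne_zero
  rw [stdGaussianCDF_eq_cdf]
  exact continuous_cdf _

lemma bddAbove_setOf_stdGaussianCDF_le {q : ℝ} (hq : q < 1) :
    BddAbove {a | stdGaussianCDF a ≤ q} := by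
  rw [stdGaussianCDF_eq_cdf]
  obtain ⟨b, hb⟩ := ((tendsto_cdf_atTop _).eventually_const_lt hq).exists
  exact ⟨b, fun a ha => le_of_not_gt fun hba => (ha.trans_lt hb).not_ge (monotone_cdf _ hba.le)⟩

lemma le_stdGaussianCDFInv {q t : ℝ} (hq : q < 1) (ht : stdGaussianCDF t ≤ q) :
    t ≤ stdGaussianCDFInv q :=
  le_csSup (bddAbove_setOf_stdGaussianCDF_le hq) ht

lemma stdGaussianCDF_stdGaussianCDFInv {q : ℝ} (hq : q ∈ Ioo 0 1) :
    stdGaussianCDF (stdGaussianCDFInv q) = q := by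
  have hne : {a | stdGaussianCDF a ≤ q}.Nonempty := by
    rw [stdGaussianCDF_eq_cdf]
    obtain ⟨a, ha⟩ := ((tendsto_cdf_atBot _).eventually_lt_const hq.1).exists
    exact ⟨a, ha.le⟩
  refine le_antisymm ((isClosed_le continuous_stdGaussianCDF continuous_const).csSup_mem hne
    (bddAbove_setOf_stdGaussianCDF_le hq.2)) (le_of_not_gt fun hlt => ?_)
  obtain ⟨b, hb, hbq⟩ :=
    ((continuous_stdGaussianCDF.tendsto _).eventually (gt_mem_nhds hlt)).exists_gt
  exact hb.not_ge (le_stdGaussianCDFInv hq.2 hbq.le)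

lemma gaussianReal_map_const_mul_real_Iic {τ : ℝ} (hτ : 0 < τ) (c : ℝ) :
    ((gaussianReal 0 1).map (τ * ·)).real (Iic c) = stdGaussianCDF (c / τ) := by
  rw [map_measureReal_apply (measurable_const_mul τ) measurableSet_Iic]
  congr 1
  ext t
  simp [le_div_iff₀ hτ, mul_comm]

lemma stdGaussian_map_inner {E : Type*} [NormedAddCommGroup E] [InnerProductSpace ℝ E]
    [FiniteDimensional ℝ E] [MeasurableSpace E] [BorelSpace E] (v : E) :
    (stdGaussian E).map (fun z => ⟪v, z⟫) = (gaussianReal 0 1).map (‖v‖ * ·) := by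
  have h := IsGaussian.map_eq_gaussianReal (μ := stdGaussian E) (innerSL ℝ v)
  rw [integral_strongDual_stdGaussian, variance_dual_stdGaussian, innerSL_apply_norm,
    Real.toNNReal_of_nonneg (by positivity)] at h
  rw [gaussianReal_map_const_mul, mul_zero, mul_one, ← h]
  rfl

lemma gaussianE_eq_map_stdGaussian (d : ℕ) (σ : ℝ) :
    gaussianE d σ = (stdGaussian (EuclideanSpace ℝ (Fin d))).map (σ • ·) := by
  have hpi : (Measure.pi fun _ : Fin d => gaussianReal 0 ⟨σ ^ 2, sq_nonneg σ⟩)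
      = (Measure.pi fun _ : Fin d => gaussianReal 0 1).map (fun x i => σ * x i) := by
    rw [Measure.pi_map_pi (fun _ => (measurable_const_mul σ).aemeasurable)]
    simp only [gaussianReal_map_const_mul, mul_zero, mul_one]
    rfl
  rw [gaussianE, hpi, ← map_pi_eq_stdGaussian, Measure.map_map (by fun_prop) (by fun_prop),
    Measure.map_map (by fun_prop) (by fun_prop)]
  rfl

lemma gaussianE_map_inner (d : ℕ) (σ : ℝ) (v : EuclideanSpace ℝ (Fin d)) :
    (gaussianE d σ).map (fun δ => ⟪v, δ⟫) = (gaussianReal 0 1).map ((σ * ‖v‖) * ·) := by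
  rw [gaussianE_eq_map_stdGaussian, Measure.map_map (by fun_prop) (by fun_prop)]
  have : (fun δ => ⟪v, δ⟫) ∘ (σ • ·) = (σ * ·) ∘ (fun z : EuclideanSpace ℝ (Fin d) => ⟪v, z⟫) := by
    ext z
    simp [inner_smul_right]
  rw [this, ← Measure.map_map (by fun_prop) (by fun_prop), stdGaussian_map_inner,
    Measure.map_map (by fun_prop) (by fun_prop)]
  congr 1
  ext t
  simp [mul_assoc]

lemma gaussianE_real_setOf_inner_le {d : ℕ} {σ : ℝ} (hσ : 0 < σ) {v : EuclideanSpace ℝ (Fin d)}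
    (hv : v ≠ 0) (c : ℝ) :
    (gaussianE d σ).real {δ | ⟪v, δ⟫ ≤ c} = stdGaussianCDF (c / (σ * ‖v‖)) := by
  rw [← gaussianReal_map_const_mul_real_Iic (by positivity) c, ← gaussianE_map_inner,
    map_measureReal_apply (by fun_prop) measurableSet_Iic]
  rfl

lemma gaussianPDFReal_mul_exp (m : ℝ) {s : ℝ≥0} (hs : s ≠ 0) (t : ℝ) :
    gaussianPDFReal 0 s t * exp ((t * m - m ^ 2 / 2) / s) = gaussianPDFReal m s t := by
  have hs' : (0 : ℝ) < s := by positivity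
  simp only [gaussianPDFReal]
  rw [mul_assoc, ← exp_add]
  congr 2
  field_simp
  ring

lemma gaussianReal_eq_withDensity_exp (m : ℝ) {s : ℝ≥0} (hs : s ≠ 0) :
    gaussianReal m s =
      (gaussianReal 0 s).withDensity (fun t => ENNReal.ofReal (exp ((t * m - m ^ 2 / 2) / s))) := by
  rw [gaussianReal_of_var_ne_zero m hs, gaussianReal_of_var_ne_zero 0 hs,
    ← withDensity_mul _ (measurable_gaussianPDF 0 s) (by fun_prop)]
  congr 1
  ext t
  simp only [Pi.mul_apply, gaussianPDF]
  rw [← ENNReal.ofReal_mul (gaussianPDFReal_nonneg _ _ _), gaussianPDFReal_mul_exp m hs]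

lemma MeasureTheory.lintegral_fin_nat_prod_eq_prod {n : ℕ} {α : Type*} [MeasurableSpace α]
    {μ : Fin n → Measure α} [∀ i, SigmaFinite (μ i)] {f : Fin n → α → ℝ≥0∞}
    (hf : ∀ i, Measurable (f i)) :
    ∫⁻ x, ∏ i, f i (x i) ∂Measure.pi μ = ∏ i, ∫⁻ x, f i x ∂μ i := by
  induction n with
  | zero => simp
  | succ n ih =>
    calc
      _ = ∫⁻ x : α × (Fin n → α), f 0 x.1 * ∏ i : Fin n, f i.succ (x.2 i)
            ∂((μ 0).prod (Measure.pi (fun i ↦ μ i.succ))) := by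
        rw [← ((measurePreserving_piFinSuccAbove μ 0).symm).lintegral_comp_emb
          (MeasurableEquiv.measurableEmbedding _)]
        simp [Fin.prod_univ_succ]
      _ = _ := by
        rw [lintegral_prod_mul (f := f 0) (g := fun y : Fin n → α => ∏ i : Fin n, f i.succ (y i))
          (hf 0).aemeasurable
          (Finset.measurable_prod _ fun i _ => (hf _).comp (measurable_pi_apply i)).aemeasurable,
          ih (fun i => hf i.succ), Fin.prod_univ_succ]

lemma MeasureTheory.Measure.pi_withDensity {n : ℕ} {α : Type*} [MeasurableSpace α]
    (μ : Fin n → Measure α) [∀ i, SigmaFinite (μ i)] {f : Fin n → α → ℝ≥0∞}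
    (hf : ∀ i, Measurable (f i)) [∀ i, SigmaFinite ((μ i).withDensity (f i))] :
    Measure.pi (fun i => (μ i).withDensity (f i))
      = (Measure.pi μ).withDensity (fun x => ∏ i, f i (x i)) := by
  refine Measure.pi_eq fun s hs => ?_
  rw [withDensity_apply _ (MeasurableSet.univ_pi hs), Measure.restrict_pi_pi,
    lintegral_fin_nat_prod_eq_prod hf]
  exact Finset.prod_congr rfl fun i _ => (withDensity_apply _ (hs i)).symm

lemma pi_gaussianReal_map_add {n : ℕ} {s : ℝ≥0} (hs : s ≠ 0) (w : Fin n → ℝ) :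
    (Measure.pi fun _ : Fin n => gaussianReal 0 s).map (· + w) =
      (Measure.pi fun _ => gaussianReal 0 s).withDensity
        (fun x => ENNReal.ofReal (exp ((∑ i, x i * w i - ∑ i, w i ^ 2 / 2) / s))) := by
  have hmap : (Measure.pi fun _ : Fin n => gaussianReal 0 s).map (· + w) =
      Measure.pi fun i => gaussianReal (w i) s := by
    have : (· + w) = fun (x : Fin n → ℝ) i => x i + w i := rfl
    rw [this, Measure.pi_map_pi (fun i => (measurable_add_const (w i)).aemeasurable)]
    simp_rw [gaussianReal_map_add_const, zero_add]
  rw [hmap, funext fun i => gaussianReal_eq_withDensity_exp (w i) hs,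
    Measure.pi_withDensity _ fun i => by fun_prop]
  congr 1
  ext x
  rw [← ENNReal.ofReal_prod_of_nonneg fun i _ => (exp_pos _).le, ← exp_sum, ← Finset.sum_div,
    Finset.sum_sub_distrib]

lemma MeasurableEquiv.map_withDensity_comp {α β : Type*} [MeasurableSpace α] [MeasurableSpace β]
    (e : α ≃ᵐ β) (μ : Measure α) {f : β → ℝ≥0∞} (hf : Measurable f) :
    (μ.withDensity (f ∘ e)).map e = (μ.map e).withDensity f := by
  ext s hs
  rw [withDensity_apply _ hs, Measure.map_apply e.measurable hs,
    withDensity_apply _ (e.measurable hs), setLIntegral_map hs hf e.measurable, Function.comp_def]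

lemma gaussianE_map_add {d : ℕ} {σ : ℝ} (hσ : σ ≠ 0) (v : EuclideanSpace ℝ (Fin d)) :
    (gaussianE d σ).map (· + v) = (gaussianE d σ).withDensity
      (fun δ => ENNReal.ofReal (exp ((⟪v, δ⟫ - ‖v‖ ^ 2 / 2) / σ ^ 2))) := by
  set e := MeasurableEquiv.toLp 2 (Fin d → ℝ)
  have hs : (⟨σ ^ 2, sq_nonneg σ⟩ : ℝ≥0) ≠ 0 := by
    simpa [← NNReal.coe_eq_zero] using hσ
  have hcomm : (· + v) ∘ e = e ∘ (· + WithLp.ofLp v) := rfl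
  rw [gaussianE, Measure.map_map (measurable_add_const v) e.measurable, hcomm,
    ← Measure.map_map e.measurable (measurable_add_const _), pi_gaussianReal_map_add hs,
    ← e.map_withDensity_comp _ (by fun_prop)]
  congr 2
  ext x
  simp [e, EuclideanSpace.real_norm_sq_eq, PiLp.inner_apply, mul_comm, Finset.sum_div]
  rfl

instance isProbabilityMeasure_gaussianE (d : ℕ) (σ : ℝ) : IsProbabilityMeasure (gaussianE d σ) := by
  rw [gaussianE_eq_map_stdGaussian]
  exact Measure.isProbabilityMeasure_map (by fun_prop)

lemma integral_comp_add_gaussianE {d : ℕ} {σ : ℝ} (hσ : σ ≠ 0) (f : EuclideanSpace ℝ (Fin d) → ℝ)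
    (v : EuclideanSpace ℝ (Fin d)) :
    ∫ δ, f (δ + v) ∂gaussianE d σ =
      ∫ δ, exp ((⟪v, δ⟫ - ‖v‖ ^ 2 / 2) / σ ^ 2) * f δ ∂gaussianE d σ := by
  have hshift := integral_map_equiv (MeasurableEquiv.addRight v) f (μ := gaussianE d σ)
  simp only [MeasurableEquiv.coe_addRight] at hshift
  rw [← hshift, gaussianE_map_add hσ, integral_withDensity_eq_integral_toReal_smul (by fun_prop)
      (ae_of_all _ fun _ => ENNReal.ofReal_lt_top)]
  simp_rw [ENNReal.toReal_ofReal (exp_pos _).le, smul_eq_mul]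

lemma integrable_exp_gaussianE {d : ℕ} {σ : ℝ} (hσ : σ ≠ 0) (v : EuclideanSpace ℝ (Fin d)) :
    Integrable (fun δ => exp ((⟪v, δ⟫ - ‖v‖ ^ 2 / 2) / σ ^ 2)) (gaussianE d σ) := by
  have hfin : ∫⁻ δ, ENNReal.ofReal (exp ((⟪v, δ⟫ - ‖v‖ ^ 2 / 2) / σ ^ 2)) ∂gaussianE d σ ≠ ⊤ := by
    rw [← setLIntegral_univ, ← withDensity_apply _ MeasurableSet.univ, ← gaussianE_map_add hσ]
    exact measure_ne_top _ _
  simpa [ENNReal.toReal_ofReal (exp_pos _).le] using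
    integrable_toReal_of_lintegral_ne_top (by fun_prop) hfin

lemma setIntegral_le_integral_mul_of_neymanPearson {α : Type*} [MeasurableSpace α]
    {μ : Measure α} [IsFiniteMeasure μ] {g ρ : α → ℝ} {S : Set α} {k : ℝ} (hS : MeasurableSet S)
    (hg : AEStronglyMeasurable g μ) (hg01 : ∀ a, g a ∈ Icc 0 1) (hρ : Integrable ρ μ)
    (hk : 0 ≤ k) (hρS : ∀ a ∈ S, ρ a ≤ k) (hρSc : ∀ a ∉ S, k ≤ ρ a)
    (hmass : μ.real S ≤ ∫ a, g a ∂μ) :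
    ∫ a in S, ρ a ∂μ ≤ ∫ a, ρ a * g a ∂μ := by
  have hg_bdd : ∀ᵐ a ∂μ, ‖g a‖ ≤ 1 := ae_of_all _ fun a => by
    rw [Real.norm_eq_abs, abs_of_nonneg (hg01 a).1]; exact (hg01 a).2
  have hgi : Integrable g μ := Integrable.of_bound hg 1 hg_bdd
  have hρg : Integrable (fun a => ρ a * g a) μ := hρ.mul_bdd hg hg_bdd
  -- `g - 1_S` and `ρ - k` have the same sign everywhere.
  have hpt : ∀ a, 0 ≤ (g a - S.indicator 1 a) * (ρ a - k) := fun a => by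
    by_cases ha : a ∈ S
    · simpa [ha] using mul_nonneg_of_nonpos_of_nonpos (sub_nonpos.2 (hg01 a).2)
        (sub_nonpos.2 (hρS a ha))
    · simpa [ha] using mul_nonneg (hg01 a).1 (sub_nonneg.2 (hρSc a ha))
  have hexpand : ∫ a, (g a - S.indicator 1 a) * (ρ a - k) ∂μ =
      (∫ a, ρ a * g a ∂μ - ∫ a in S, ρ a ∂μ) - k * (∫ a, g a ∂μ - μ.real S) := by
    have : (fun a => (g a - S.indicator 1 a) * (ρ a - k)) =
        fun a => (ρ a * g a - S.indicator ρ a) - k * (g a - S.indicator 1 a) := by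
      ext a
      by_cases ha : a ∈ S <;> simp [ha] <;> ring
    have hSρ : Integrable (S.indicator ρ) μ := hρ.indicator hS
    have hS1 : Integrable (S.indicator (1 : α → ℝ)) μ := (integrable_const 1).indicator hS
    have h₁ : Integrable (fun a => ρ a * g a - S.indicator ρ a) μ := hρg.sub hSρ
    have h₂ : Integrable (fun a => g a - S.indicator 1 a) μ := hgi.sub hS1
    rw [this, integral_sub h₁ (h₂.const_mul k), integral_sub hρg hSρ,
      integral_const_mul, integral_sub hgi hS1, integral_indicator hS, integral_indicator_one hS]
  have := integral_nonneg (μ := μ) (f := fun a => (g a - S.indicator 1 a) * (ρ a - k)) hpt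
  nlinarith

lemma stdGaussianCDF_sub_le_integral_comp_add {d : ℕ} {σ : ℝ} (hσ : 0 < σ)
    {g : EuclideanSpace ℝ (Fin d) → ℝ} (hg : Measurable g) (hg01 : ∀ z, g z ∈ Icc 0 1)
    (hint : ∫ δ, g δ ∂gaussianE d σ ∈ Ioo 0 1) (v : EuclideanSpace ℝ (Fin d)) :
    stdGaussianCDF (stdGaussianCDFInv (∫ δ, g δ ∂gaussianE d σ) - ‖v‖ / σ) ≤
      ∫ δ, g (δ + v) ∂gaussianE d σ := by
  set μ := gaussianE d σ
  set t := stdGaussianCDFInv (∫ δ, g δ ∂μ)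
  rcases eq_or_ne v 0 with rfl | hv
  · simp [t, stdGaussianCDF_stdGaussianCDFInv hint]
  set c := σ * ‖v‖ * t
  set S := {δ | ⟪v, δ⟫ ≤ c}
  have hS : MeasurableSet S := measurableSet_le (by fun_prop) measurable_const
  set ρ := fun δ => exp ((⟪v, δ⟫ - ‖v‖ ^ 2 / 2) / σ ^ 2)
  have hρ_mono : Monotone fun u => exp ((u - ‖v‖ ^ 2 / 2) / σ ^ 2) := fun u u' huu' =>
    exp_le_exp.2 (by gcongr)
  have hmass : μ.real S = ∫ δ, g δ ∂μ := by
    rw [gaussianE_real_setOf_inner_le hσ hv, show c / (σ * ‖v‖) = t by simp only [c]; field_simp,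
      stdGaussianCDF_stdGaussianCDFInv hint]
  have hSρ : ∫ δ in S, ρ δ ∂μ = stdGaussianCDF (t - ‖v‖ / σ) := calc
    ∫ δ in S, ρ δ ∂μ = ∫ δ, ρ δ * S.indicator 1 δ ∂μ := by
      rw [← integral_indicator hS]
      congr 1 with δ
      by_cases hδ : δ ∈ S <;> simp [hδ]
    _ = μ.real {δ | ⟪v, δ⟫ ≤ c - ‖v‖ ^ 2} := by
      rw [← integral_comp_add_gaussianE hσ.ne', ← integral_indicator_one
        (measurableSet_le (by fun_prop) measurable_const)]
      congr 1 with δ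
      simp [S, indicator, inner_add_right, le_sub_iff_add_le]
    _ = stdGaussianCDF (t - ‖v‖ / σ) := by
      rw [gaussianE_real_setOf_inner_le hσ hv]
      congr 1
      simp only [c]
      field_simp
  rw [integral_comp_add_gaussianE hσ.ne', ← hSρ]
  exact setIntegral_le_integral_mul_of_neymanPearson hS hg.aestronglyMeasurable hg01
    (integrable_exp_gaussianE hσ.ne' v) (exp_pos _).le (fun δ hδ => hρ_mono hδ)
    (fun δ hδ => hρ_mono (not_le.1 hδ).le) hmass.le

/-- Lemma B.1: for measurable `h : ℝ^d → [0,1]` and `σ > 0`, the map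
`x ↦ σ·Φ⁻¹(p(x))`, where `p(x) = ∫ h(x + δ) dN(0, σ²I)(δ)`, is 1-Lipschitz. -/
theorem stmt_0 (d : ℕ) (σ : ℝ) (hσ : 0 < σ)
    (h : EuclideanSpace ℝ (Fin d) → ℝ) (hmeas : Measurable h)
    (hrange : ∀ z, h z ∈ Set.Icc (0 : ℝ) 1)
    (p : EuclideanSpace ℝ (Fin d) → ℝ)
    (hp : ∀ x, p x = ∫ δ, h (x + δ) ∂(gaussianE d σ))
    (x x' : EuclideanSpace ℝ (Fin d))
    (hx : p x ∈ Set.Ioo (0 : ℝ) 1) (hx' : p x' ∈ Set.Ioo (0 : ℝ) 1) :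
    σ * |stdGaussianCDFInv (p x) - stdGaussianCDFInv (p x')| ≤ ‖x - x'‖ := by
  have key : ∀ y y', p y ∈ Ioo 0 1 → p y' < 1 →
      stdGaussianCDFInv (p y) - ‖y - y'‖ / σ ≤ stdGaussianCDFInv (p y') := by
    intro y y' hy hy'
    refine le_stdGaussianCDFInv hy' ?_
    rw [hp y] at hy ⊢
    convert stdGaussianCDF_sub_le_integral_comp_add (g := fun δ => h (y + δ)) hσ
      (hmeas.comp (measurable_const_add y))
      (fun δ => hrange _) hy (y' - y) using 1
    · rw [norm_sub_rev]
    · rw [hp y']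
      congr 1 with δ
      congr 1
      abel
  have h₁ := key x x' hx hx'.2
  have h₂ := key x' x hx' hx.2
  rw [norm_sub_rev] at h₂
  rw [← le_div_iff₀' hσ, abs_sub_le_iff]
  constructor <;> linarith
end

section
/- (Lemma C.1.) Fix an integer K ≥ 1, real numbers a₁, …, a_K > 0 and t ≠ 0, and on the probability simplex Δ = {b ∈ ℝ^K : b_k ≥ 0 for all k, ∑_k b_k = 1} define R(b) := (1/K)·∑_{k=1}^K a_k / √(t²·b_k + 1). Let A := max_k a_k and M_a := {m : a_m = A}. Then for any b* minimizing R over Δ, one has b*_m = b*_{m'} > 0 for all m, m' ∈ M_a. -/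
/-!
Each summand `x ↦ aₖ (√(t² x + 1))⁻¹` is strictly convex and decreasing on `[0, ∞)`. At a
minimizer, replacing the values at two indices of equal weight by their average would strictly
lower the objective, and so would moving half of any positive coordinate onto a zero coordinate
of maximal weight.
-/

open Finset Function

section Transfer

variable {ι : Type*} [Fintype ι] [DecidableEq ι]

lemma sum_apply_update_add {M α : Type*} [AddCommMonoid M] (F : ι → α → M) (b : ι → α)
    (i : ι) (x : α) :
    ∑ k, F k (update b i x k) + F i (b i) = ∑ k, F k (b k) + F i x := by
  simp only [apply_update F b i x, sum_update_of_mem (mem_univ i),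
    ← add_sum_erase univ _ (mem_univ i), sdiff_singleton_eq_erase]
  abel

lemma IsMinOn.apply_add_apply_le_of_transfer (F : ι → ℝ → ℝ) {b : ι → ℝ}
    (hb : b ∈ stdSimplex ℝ ι) (hmin : IsMinOn (fun b ↦ ∑ k, F k (b k)) (stdSimplex ℝ ι) b)
    {i j : ι} (hij : i ≠ j) {u v : ℝ} (hu : 0 ≤ u) (hv : 0 ≤ v) (huv : u + v = b i + b j) :
    F i (b i) + F j (b j) ≤ F i u + F j v := by
  set b' := update (update b i u) j v
  have hsum : ∀ G : ι → ℝ → ℝ,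
      ∑ k, G k (b' k) + (G i (b i) + G j (b j)) = ∑ k, G k (b k) + (G i u + G j v) := by
    intro G
    have h₁ := sum_apply_update_add G b i u
    have h₂ := sum_apply_update_add G (update b i u) j v
    rw [update_of_ne hij.symm] at h₂
    linear_combination h₁ + h₂
  have hb' : b' ∈ stdSimplex ℝ ι := by
    refine ⟨fun k ↦ ?_, ?_⟩
    · simp only [b', update_apply]
      split_ifs
      exacts [hv, hu, hb.1 k]
    · linear_combination hsum (fun _ x ↦ x) + hb.2 + huv
  have hle : ∑ k, F k (b k) ≤ ∑ k, F k (b' k) := hmin hb'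
  linarith [hsum F]

end Transfer

section InvSqrt

variable {s : ℝ}

lemma antitoneOn_inv_sqrt_mul_add_one (hs : 0 ≤ s) :
    AntitoneOn (fun x ↦ (√(s * x + 1))⁻¹) (Set.Ici 0) := fun x hx _ _ hxy ↦
  inv_anti₀ (Real.sqrt_pos.mpr (by simp only [Set.mem_Ici] at hx; positivity))
    (Real.sqrt_le_sqrt (by nlinarith))

/-- With `p, q, r` the square roots at `x`, `y` and the midpoint, `r² = (p² + q²)/2` exceeds
`((p + q)/2)²`, so `2pq ≤ (p + q)²/2 < r (p + q)`. -/
lemma two_mul_inv_sqrt_midpoint_lt (hs : 0 < s) {x y : ℝ} (hx : 0 ≤ x) (hy : 0 ≤ y)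
    (hxy : x ≠ y) :
    2 * (√(s * ((x + y) / 2) + 1))⁻¹ < (√(s * x + 1))⁻¹ + (√(s * y + 1))⁻¹ := by
  set p := √(s * x + 1)
  set q := √(s * y + 1)
  set r := √(s * ((x + y) / 2) + 1)
  have hp : 0 < p := Real.sqrt_pos.mpr (by positivity)
  have hq : 0 < q := Real.sqrt_pos.mpr (by positivity)
  have hr : 0 < r := Real.sqrt_pos.mpr (by positivity)
  have hr2 : 2 * r ^ 2 = p ^ 2 + q ^ 2 := by
    rw [Real.sq_sqrt (by positivity), Real.sq_sqrt (by positivity), Real.sq_sqrt (by positivity)]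
    ring
  have hpq : p ≠ q := fun h ↦ hxy <| by
    have := Real.sqrt_inj (by positivity) (by positivity) |>.mp h
    nlinarith
  have hpq2 : 0 < (p - q) ^ 2 := by positivity [sub_ne_zero.mpr hpq]
  have hmean : p + q < 2 * r := by nlinarith
  have key : 2 * (p * q) < r * (p + q) := by nlinarith
  rw [← one_div, ← one_div, ← one_div, div_add_div _ _ hp.ne' hq.ne', mul_one_div,
    div_lt_div_iff₀ hr (by positivity)]
  linarith

end InvSqrt

section MinimizerInvSqrt

variable {ι : Type*} [Fintype ι] [DecidableEq ι] {a b : ι → ℝ} {s : ℝ}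

lemma IsMinOn.eq_of_sum_div_sqrt (hs : 0 < s) (hb : b ∈ stdSimplex ℝ ι)
    (hmin : IsMinOn (fun b ↦ ∑ k, a k / √(s * b k + 1)) (stdSimplex ℝ ι) b) {m m' : ι}
    (ha : 0 < a m) (ham : a m = a m') : b m = b m' := by
  by_contra hne
  have hmm' : m ≠ m' := by rintro rfl; exact hne rfl
  have hmid := two_mul_inv_sqrt_midpoint_lt hs (hb.1 m) (hb.1 m') hne
  have hle := hmin.apply_add_apply_le_of_transfer (fun k x ↦ a k / √(s * x + 1)) hb hmm'
    (u := (b m + b m') / 2) (v := (b m + b m') / 2) (by linarith [hb.1 m, hb.1 m'])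
    (by linarith [hb.1 m, hb.1 m']) (by ring)
  simp only [← ham, div_eq_mul_inv (a _)] at hle
  nlinarith [mul_lt_mul_of_pos_left hmid ha]

/-- Strict midpoint convexity of `f x = (√(s x + 1))⁻¹` gives
`f 0 - f (b k / 2) > f (b k / 2) - f (b k) ≥ 0`, so if `b m = 0` then moving half of a positive
`b k` onto `m` would lower the objective. -/
lemma IsMinOn.pos_of_sum_div_sqrt (hs : 0 < s) (hb : b ∈ stdSimplex ℝ ι)
    (hmin : IsMinOn (fun b ↦ ∑ k, a k / √(s * b k + 1)) (stdSimplex ℝ ι) b) {m : ι}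
    (ha : 0 < a m) (hmax : ∀ k, a k ≤ a m) : 0 < b m := by
  by_contra! hbm
  replace hbm : b m = 0 := le_antisymm hbm (hb.1 m)
  obtain ⟨k, hk⟩ : ∃ k, 0 < b k := by
    by_contra! h
    linarith [sum_nonpos (s := univ) fun k _ ↦ h k, hb.2]
  have hmk : m ≠ k := by rintro rfl; linarith
  have hmid := two_mul_inv_sqrt_midpoint_lt hs le_rfl hk.le hk.ne
  have hanti := antitoneOn_inv_sqrt_mul_add_one hs.le (Set.mem_Ici.mpr (half_pos hk).le)
    (Set.mem_Ici.mpr hk.le) (half_le_self hk.le)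
  have hle := hmin.apply_add_apply_le_of_transfer (fun k x ↦ a k / √(s * x + 1)) hb hmk
    (u := b k / 2) (v := b k / 2) (half_pos hk).le (half_pos hk).le (by rw [hbm]; ring)
  simp only [hbm, zero_add, div_eq_mul_inv (a _)] at hmid hanti hle
  nlinarith [mul_le_mul_of_nonneg_right (hmax k) (sub_nonneg.mpr hanti)]

end MinimizerInvSqrt

theorem stmt_8_general {K : ℕ} (a : Fin K → ℝ) (ha : ∀ k, 0 < a k)
    (t : ℝ) (ht : t ≠ 0)
    (R : (Fin K → ℝ) → ℝ)
    (hR : ∀ b, R b = (1 / K : ℝ) * ∑ k, a k / Real.sqrt (t ^ 2 * b k + 1))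
    (A : ℝ) (hub : ∀ k, a k ≤ A)
    (bstar : Fin K → ℝ)
    (hmem : (∀ k, 0 ≤ bstar k) ∧ ∑ k, bstar k = 1)
    (hmin : ∀ b : Fin K → ℝ, (∀ k, 0 ≤ b k) → (∑ k, b k = 1) → R bstar ≤ R b) :
    ∀ m m' : Fin K, a m = A → a m' = A → bstar m = bstar m' ∧ 0 < bstar m := by
  intro m m' ham ham'
  have hK_inv : (0 : ℝ) < 1 / K := one_div_pos.mpr (Nat.cast_pos.mpr m.pos)
  have hs : 0 < t ^ 2 := by positivity
  have hmin' : IsMinOn (fun b ↦ ∑ k, a k / √(t ^ 2 * b k + 1)) (stdSimplex ℝ (Fin K)) bstar :=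
    fun b hb ↦ by
      have h := hmin b hb.1 hb.2
      rw [hR, hR] at h
      exact le_of_mul_le_mul_left h hK_inv
  exact ⟨hmin'.eq_of_sum_div_sqrt hs hmem (ha m) (ham.trans ham'.symm),
    hmin'.pos_of_sum_div_sqrt hs hmem (ha m) (ham ▸ hub)⟩

/-- Lemma C.1.  On the probability simplex, any minimizer `b*` of
`R(b) = (1/K)·∑ₖ aₖ/√(t²bₖ+1)` takes a common positive value on the set of indices where
`a` attains its maximum `A` (characterized by `hub` and `hex`). -/
theorem stmt_8 {K : ℕ} (hK : 0 < K) (a : Fin K → ℝ) (ha : ∀ k, 0 < a k)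
    (t : ℝ) (ht : t ≠ 0)
    (R : (Fin K → ℝ) → ℝ)
    (hR : ∀ b, R b = (1 / K : ℝ) * ∑ k, a k / Real.sqrt (t ^ 2 * b k + 1))
    (A : ℝ) (hub : ∀ k, a k ≤ A) (hex : ∃ k, a k = A)
    (bstar : Fin K → ℝ)
    (hmem : (∀ k, 0 ≤ bstar k) ∧ ∑ k, bstar k = 1)
    (hmin : ∀ b : Fin K → ℝ, (∀ k, 0 ≤ b k) → (∑ k, b k = 1) → R bstar ≤ R b) :
    ∀ m m' : Fin K, a m = A → a m' = A → bstar m = bstar m' ∧ 0 < bstar m :=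
  stmt_8_general a ha t ht R hR A hub bstar hmem hmin
end

section
/- (Lemma C.2.) Fix an integer K ≥ 1, real numbers a₁, …, a_K > 0 and t ≠ 0, and on the probability simplex Δ = {b ∈ ℝ^K : b_k ≥ 0 for all k, ∑_k b_k = 1} define R(b) := (1/K)·∑_{k=1}^K a_k / √(t²·b_k + 1). Let A := max_k a_k, M_a := {m : a_m = A}, let b* be a minimizer of R over Δ, and let B denote the common value b*_m for m ∈ M_a (which is positive). Then for every k ∈ {1, …, K}: b*_k = 0 if and only if a_k ≤ A / (t²·B + 1)^{3/2}. -/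
/-!
At a minimizer of a separable function `∑ᵢ fᵢ(bᵢ)` on the simplex, shifting mass from a
coordinate `m` with `bₘ > 0` to any coordinate `k` cannot decrease the objective, so
`f'ₘ(bₘ) ≤ f'ₖ(bₖ)`. For `fᵢ(x) = aᵢ/√(t²x+1)` this says that the marginal value
`aᵢ/(t²bᵢ+1)^{3/2}` is largest on the support of `b`. Comparing `k` with an index `m` where
`aₘ = A` gives `aₖ ≤ A/(t²B+1)^{3/2}` when `bₖ = 0`; when `bₖ > 0` the reverse comparison gives
`A/(t²B+1)^{3/2} ≤ aₖ/(t²bₖ+1)^{3/2} < aₖ`.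
-/

open Finset

theorem IsMinOn.hasDerivAt_le_of_stdSimplex {ι : Type*} [Fintype ι] [DecidableEq ι]
    {f : ι → ℝ → ℝ} {f' : ι → ℝ} {b : ι → ℝ} (hb : b ∈ stdSimplex ℝ ι)
    (hmin : IsMinOn (fun x ↦ ∑ i, f i (x i)) (stdSimplex ℝ ι) b)
    (hf : ∀ i, HasDerivAt (f i) (f' i) (b i)) (k : ι) {m : ι} (hm : 0 < b m) :
    f' m ≤ f' k := by
  set v : ι → ℝ := Pi.single k 1 - Pi.single m 1
  have hv : b + b m • v ∈ stdSimplex ℝ ι := by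
    refine ⟨fun i ↦ ?_, by simp [v, sum_add_distrib, ← mul_sum, hb.2]⟩
    have hsingle : 0 ≤ (Pi.single k 1 : ι → ℝ) i := by
      rw [Pi.single_apply]; split_ifs <;> norm_num
    rcases eq_or_ne i m with rfl | him
    · simp only [v, Pi.add_apply, Pi.smul_apply, Pi.sub_apply, smul_eq_mul, Pi.single_eq_same]
      nlinarith
    · simp only [v, Pi.add_apply, Pi.smul_apply, Pi.sub_apply, smul_eq_mul,
        Pi.single_eq_of_ne him, sub_zero]
      nlinarith [hb.1 i]
  have hF : HasFDerivAt (fun x : ι → ℝ ↦ ∑ i, f i (x i))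
      (∑ i, f' i • ContinuousLinearMap.proj i) b :=
    HasFDerivAt.fun_sum fun i _ ↦
      ((hf i).hasFDerivAt.comp b (hasFDerivAt_apply i b)).congr_fderiv (by ext; simp [mul_comm])
  have hdir := hmin.localize.hasFDerivWithinAt_nonneg hF.hasFDerivWithinAt
    (mem_posTangentConeAt_of_segment_subset ((convex_stdSimplex ℝ ι).segment_subset hb hv))
  simp only [map_smul, _root_.sum_apply, _root_.smul_apply,
    ContinuousLinearMap.proj_apply, Pi.sub_apply, Pi.single_apply, smul_eq_mul, mul_sub, mul_ite,
    mul_one, mul_zero, sum_sub_distrib, sum_ite_eq', mem_univ, if_true, sub_nonneg, v] at hdir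
  exact le_of_mul_le_mul_left hdir hm

theorem hasDerivAt_div_sqrt_mul_add_one (a c : ℝ) {x : ℝ} (hx : 0 < c * x + 1) :
    HasDerivAt (fun y ↦ a / √(c * y + 1)) (-(c / 2) * (a / (c * x + 1) ^ ((3 : ℝ) / 2))) x := by
  have hlin : HasDerivAt (fun y ↦ c * y + 1) c x := by
    simpa using ((hasDerivAt_id x).const_mul c).add_const 1
  have hsqrt_pos : 0 < √(c * x + 1) := Real.sqrt_pos.2 hx
  refine ((hasDerivAt_const x a).div (hlin.sqrt hx.ne') hsqrt_pos.ne').congr_deriv ?_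
  rw [show (3 : ℝ) / 2 = 1 + 1 / 2 by norm_num, Real.rpow_add hx, Real.rpow_one,
    ← Real.sqrt_eq_rpow, Real.sq_sqrt hx.le]
  field_simp
  ring

theorem div_rpow_le_of_isMinOn_stdSimplex {ι : Type*} [Fintype ι] {a : ι → ℝ} {t : ℝ}
    (ht : t ≠ 0) {b : ι → ℝ} (hb : b ∈ stdSimplex ℝ ι)
    (hmin : IsMinOn (fun x ↦ ∑ i, a i / √(t ^ 2 * x i + 1)) (stdSimplex ℝ ι) b)
    (k : ι) {m : ι} (hm : 0 < b m) :
    a k / (t ^ 2 * b k + 1) ^ ((3 : ℝ) / 2) ≤ a m / (t ^ 2 * b m + 1) ^ ((3 : ℝ) / 2) := by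
  classical
  have hpos (i : ι) : 0 < t ^ 2 * b i + 1 := by have := hb.1 i; positivity
  have hderiv := hmin.hasDerivAt_le_of_stdSimplex hb
    (fun i ↦ hasDerivAt_div_sqrt_mul_add_one (a i) (t ^ 2) (hpos i)) k hm
  have ht2 : 0 < t ^ 2 / 2 := by positivity
  exact (mul_le_mul_left_of_neg (neg_lt_zero.2 ht2)).mp hderiv

theorem stmt_9_general {K : ℕ} (a : Fin K → ℝ) (ha : ∀ k, 0 < a k)
    (t : ℝ) (ht : t ≠ 0)
    (R : (Fin K → ℝ) → ℝ)
    (hR : ∀ b, R b = (1 / K : ℝ) * ∑ k, a k / Real.sqrt (t ^ 2 * b k + 1))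
    (A : ℝ) (hex : ∃ k, a k = A)
    (bstar : Fin K → ℝ)
    (hmem : (∀ k, 0 ≤ bstar k) ∧ ∑ k, bstar k = 1)
    (hmin : ∀ b : Fin K → ℝ, (∀ k, 0 ≤ b k) → (∑ k, b k = 1) → R bstar ≤ R b)
    (B : ℝ) (hB : ∀ m, a m = A → bstar m = B) (hBpos : 0 < B) :
    ∀ k : Fin K, bstar k = 0 ↔ a k ≤ A / (t ^ 2 * B + 1) ^ ((3 : ℝ) / 2) := by
  obtain ⟨m, hm⟩ := hex
  have hK : (0 : ℝ) < K := Nat.cast_pos.2 m.pos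
  have hmin' : IsMinOn (fun b ↦ ∑ k, a k / √(t ^ 2 * b k + 1)) (stdSimplex ℝ (Fin K)) bstar :=
    isMinOn_iff.2 fun b hb ↦ by
      have hR_le := hmin b hb.1 hb.2
      rw [hR, hR] at hR_le
      exact le_of_mul_le_mul_left hR_le (by positivity)
  have hBm : bstar m = B := hB m hm
  have hmarginal := div_rpow_le_of_isMinOn_stdSimplex ht hmem hmin'
  intro k
  constructor
  · intro hk
    have hkm := hmarginal k (show 0 < bstar m by rwa [hBm])
    rwa [hk, hBm, hm, mul_zero, zero_add, Real.one_rpow, div_one] at hkm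
  · intro hle
    by_contra hk
    have hkpos : 0 < bstar k := lt_of_le_of_ne (hmem.1 k) (Ne.symm hk)
    have hU : 1 < (t ^ 2 * bstar k + 1) ^ ((3 : ℝ) / 2) :=
      Real.one_lt_rpow (lt_add_of_pos_left 1 (by positivity)) (by norm_num)
    have hkm := hmarginal m hkpos
    rw [hBm, hm] at hkm
    linarith [div_lt_self (ha k) hU]

/-- Lemma C.2.  Let `b*` minimize `R(b) = (1/K)·∑ₖ aₖ/√(t²bₖ+1)` over the
probability simplex, and let `B` be the common (positive, by Lemma C.1) value of `b*` on the
set of indices where `a` attains its maximum `A`.  Then `b*ₖ = 0 ↔ aₖ ≤ A/(t²B+1)^{3/2}`. -/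
theorem stmt_9 {K : ℕ} (hK : 0 < K) (a : Fin K → ℝ) (ha : ∀ k, 0 < a k)
    (t : ℝ) (ht : t ≠ 0)
    (R : (Fin K → ℝ) → ℝ)
    (hR : ∀ b, R b = (1 / K : ℝ) * ∑ k, a k / Real.sqrt (t ^ 2 * b k + 1))
    (A : ℝ) (hub : ∀ k, a k ≤ A) (hex : ∃ k, a k = A)
    (bstar : Fin K → ℝ)
    (hmem : (∀ k, 0 ≤ bstar k) ∧ ∑ k, bstar k = 1)
    (hmin : ∀ b : Fin K → ℝ, (∀ k, 0 ≤ b k) → (∑ k, b k = 1) → R bstar ≤ R b)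
    (B : ℝ) (hB : ∀ m, a m = A → bstar m = B) (hBpos : 0 < B) :
    ∀ k : Fin K, bstar k = 0 ↔ a k ≤ A / (t ^ 2 * B + 1) ^ ((3 : ℝ) / 2) :=
  stmt_9_general a ha t ht R hR A hex bstar hmem hmin B hB hBpos
end

section
/- (Monotone allocation at the minimizer.) Fix an integer K ≥ 1, real numbers a₁, …, a_K > 0 and t ≠ 0, and on the probability simplex Δ = {b ∈ ℝ^K : b_k ≥ 0 for all k, ∑_k b_k = 1} define R(b) := (1/K)·∑_{k=1}^K a_k / √(t²·b_k + 1). If b* minimizes R over Δ, then for all indices i, j with a_i > a_j one has b*_i ≥ b*_j. In particular, swapping the coordinates b_i and b_j of any b ∈ Δ with a_i > a_j and b_i < b_j strictly decreases R. -/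
/-- monotone allocation at the minimizer.  If `b*` minimizes
`R(b) = (1/K)·∑ₖ aₖ/√(t²bₖ+1)` over the probability simplex, then `aᵢ > aⱼ` implies
`b*ᵢ ≥ b*ⱼ`; in particular, swapping coordinates `bᵢ < bⱼ` of any point of the simplex with
`aᵢ > aⱼ` strictly decreases `R`. -/
theorem stmt_11 {K : ℕ} (hK : 0 < K) (a : Fin K → ℝ) (ha : ∀ k, 0 < a k)
    (t : ℝ) (ht : t ≠ 0)
    (R : (Fin K → ℝ) → ℝ)
    (hR : ∀ b, R b = (1 / K : ℝ) * ∑ k, a k / Real.sqrt (t ^ 2 * b k + 1))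
    (bstar : Fin K → ℝ)
    (hmem : (∀ k, 0 ≤ bstar k) ∧ ∑ k, bstar k = 1)
    (hmin : ∀ b : Fin K → ℝ, (∀ k, 0 ≤ b k) → (∑ k, b k = 1) → R bstar ≤ R b) :
    (∀ i j : Fin K, a j < a i → bstar j ≤ bstar i) ∧
    (∀ b : Fin K → ℝ, (∀ k, 0 ≤ b k) → (∑ k, b k = 1) →
      ∀ i j : Fin K, a j < a i → b i < b j →
        R (Function.update (Function.update b i (b j)) j (b i)) < R b) := by
  have ht2 : (0:ℝ) < t ^ 2 := by positivity
  -- main swap lemma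
  have main : ∀ b : Fin K → ℝ, (∀ k, 0 ≤ b k) → (∑ k, b k = 1) →
      ∀ i j : Fin K, a j < a i → b i < b j →
        R (Function.update (Function.update b i (b j)) j (b i)) < R b := by
    intro b hb hs i j hij hbij
    have hne : i ≠ j := by
      rintro rfl; exact absurd hbij (lt_irrefl _)
    set c := Function.update (Function.update b i (b j)) j (b i) with hc
    have hci : c i = b j := by
      simp [hc, Function.update_apply, hne]
    have hcj : c j = b i := by simp [hc]
    have hck : ∀ k, k ≠ i → k ≠ j → c k = b k := by
      intro k hki hkj
      simp [hc, Function.update_apply, hki, hkj]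
    set s : ℝ → ℝ := fun x => Real.sqrt (t ^ 2 * x + 1) with hsdef
    have hspos : ∀ x : ℝ, 0 ≤ x → 0 < s x := by
      intro x hx
      apply Real.sqrt_pos.mpr
      nlinarith
    have hu : 0 < s (b i) := hspos _ (hb i)
    have hv : 0 < s (b j) := hspos _ (hb j)
    have huv : s (b i) < s (b j) := by
      apply Real.sqrt_lt_sqrt (by nlinarith [hb i])
      nlinarith
    have h1 : (1:ℝ) / s (b j) < 1 / s (b i) := one_div_lt_one_div_of_lt hu huv
    -- the two-term comparison
    have key : a i / s (b j) + a j / s (b i) < a i / s (b i) + a j / s (b j) := by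
      rw [div_eq_mul_one_div (a i), div_eq_mul_one_div (a j),
        div_eq_mul_one_div (a i), div_eq_mul_one_div (a j)]
      nlinarith [sub_pos.mpr h1, sub_pos.mpr hij]
    -- sum difference
    have hsum : ∑ k, a k / s (c k) - ∑ k, a k / s (b k)
        = (a i / s (b j) + a j / s (b i)) - (a i / s (b i) + a j / s (b j)) := by
      rw [← Finset.sum_sub_distrib]
      have : ∑ k, (a k / s (c k) - a k / s (b k))
          = ∑ k ∈ ({i, j} : Finset (Fin K)), (a k / s (c k) - a k / s (b k)) := by
        refine (Finset.sum_subset (Finset.subset_univ _) ?_).symm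
        intro k _ hk
        simp only [Finset.mem_insert, Finset.mem_singleton, not_or] at hk
        rw [hck k hk.1 hk.2]
        ring
      rw [this, Finset.sum_pair hne, hci, hcj]
      ring
    have hsum' : ∑ k, a k / s (c k) < ∑ k, a k / s (b k) := by
      have : ∑ k, a k / s (c k) - ∑ k, a k / s (b k) < 0 := by
        rw [hsum]; linarith
      linarith
    rw [hR, hR]
    have hKpos : (0:ℝ) < 1 / K := by positivity
    exact mul_lt_mul_of_pos_left hsum' hKpos
  refine ⟨?_, main⟩
  intro i j hij
  by_contra hlt
  push_neg at hlt
  have h2 := main bstar hmem.1 hmem.2 i j hij hlt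
  set c := Function.update (Function.update bstar i (bstar j)) j (bstar i) with hc
  have hne : i ≠ j := by rintro rfl; exact absurd hlt (lt_irrefl _)
  have hceq : c = bstar ∘ Equiv.swap i j := by
    funext k
    by_cases hk : k = j
    · subst hk; simp [hc, Equiv.swap_apply_right]
    · by_cases hk2 : k = i
      · subst hk2; simp [hc, Function.update_apply, hne, Equiv.swap_apply_left]
      · simp [hc, Function.update_apply, hk, hk2, Equiv.swap_apply_of_ne_of_ne hk2 hk]
  have hcnn : ∀ k, 0 ≤ c k := by
    intro k; rw [hceq]; exact hmem.1 _
  have hcsum : ∑ k, c k = 1 := by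
    rw [hceq]
    rw [← Equiv.sum_comp (Equiv.swap i j) bstar] at hmem
    exact hmem.2
  exact absurd (hmin c hcnn hcsum) (not_le.mpr h2)
end

section
/- (Stationarity formula for positive coordinates of the minimizer.) Fix an integer K ≥ 1, real numbers a₁, …, a_K > 0 and t ≠ 0, and on the probability simplex Δ = {b ∈ ℝ^K : b_k ≥ 0 for all k, ∑_k b_k = 1} define R(b) := (1/K)·∑_{k=1}^K a_k / √(t²·b_k + 1). Let A := max_k a_k, M_a := {m : a_m = A}, let b* be a minimizer of R over Δ, and let B denote the common value b*_m for m ∈ M_a. Then for every k with b*_k > 0, one has a_k / (t²·b*_k + 1)^{3/2} = A / (t²·B + 1)^{3/2}; equivalently, b*_k = (1/t²)·( (a_k/A)^{2/3}·(t²·B + 1) − 1 ). -/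
/-!
Shifting mass between a coordinate `k` with `b*ₖ > 0` and a coordinate `m` with `aₘ = A` keeps
`b*` in the simplex, so the one-variable restriction `x ↦ aₖ/√(t²x+1) + A/√(t²(b*ₖ+B-x)+1)` is
minimized on `[0, b*ₖ + B]` at `b*ₖ`. Its derivative there is `≤ 0`, which gives
`A/(t²B+1)^{3/2} ≤ aₖ/(t²b*ₖ+1)^{3/2}`. If `B = 0` the left side is `A` while the right side is
`< aₖ ≤ A`; hence `B > 0`, and exchanging the roles of `k` and `m` gives the reverse inequality.
-/

open Set Real

theorem HasDerivAt.nonpos_of_isMinOn_Icc {g : ℝ → ℝ} {g' lo hi x : ℝ} (hg : HasDerivAt g g' x)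
    (hmin : IsMinOn g (Icc lo hi) x) (hx : x ∈ Ioc lo hi) : g' ≤ 0 := by
  have hseg : openSegment ℝ x lo ⊆ Icc lo hi :=
    (openSegment_subset_segment ℝ x lo).trans <| (convex_Icc lo hi).segment_subset
      (Ioc_subset_Icc_self hx) (left_mem_Icc.2 (hx.1.le.trans hx.2))
  have h := hmin.localize.hasFDerivWithinAt_nonneg hg.hasFDerivAt.hasFDerivWithinAt
    (sub_mem_posTangentConeAt_of_openSegment_subset hseg)
  simp only [ContinuousLinearMap.toSpanSingleton_apply, smul_eq_mul] at h
  nlinarith [hx.1]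

theorem IsMinOn.exchange_stdSimplex {ι : Type*} [Fintype ι] {f : ι → ℝ → ℝ}
    {b : ι → ℝ} (hmin : IsMinOn (fun c => ∑ j, f j (c j)) (stdSimplex ℝ ι) b)
    (hb : b ∈ stdSimplex ℝ ι) {k m : ι} (hkm : k ≠ m) :
    IsMinOn (fun x => f k x + f m (b k + b m - x)) (Icc 0 (b k + b m)) (b k) := by
  classical
  intro x hx
  set c := Function.update (Function.update b m (b k + b m - x)) k x
  have hck : c k = x := by simp [c]
  have hcm : c m = b k + b m - x := by simp [c, hkm.symm]
  have hc : ∀ j, j ≠ k ∧ j ≠ m → c j = b j := fun j hj => by simp [c, hj.1, hj.2]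
  have hdiff : ∀ F : ι → ℝ → ℝ, ∑ j, F j (c j) - ∑ j, F j (b j) =
      (F k x - F k (b k)) + (F m (b k + b m - x) - F m (b m)) := by
    intro F
    rw [← Finset.sum_sub_distrib, Fintype.sum_eq_add k m hkm (fun j hj => by simp [hc j hj]),
      hck, hcm]
  have hcs : c ∈ stdSimplex ℝ ι := by
    refine ⟨fun j => ?_, ?_⟩
    · rcases eq_or_ne j k with rfl | hjk
      · exact hck ▸ hx.1
      rcases eq_or_ne j m with rfl | hjm
      · exact hcm ▸ sub_nonneg.2 hx.2
      · exact hc j ⟨hjk, hjm⟩ ▸ hb.1 j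
    · linarith [hdiff fun _ y => y, hb.2]
  have hle : ∑ j, f j (b j) ≤ ∑ j, f j (c j) := hmin hcs
  simp only [mem_ofPred_eq, add_sub_cancel_left]
  linarith [hdiff f]

theorem rpow_three_halves_eq_sqrt_mul {u : ℝ} (hu : 0 ≤ u) : u ^ ((3 : ℝ) / 2) = √u * u := by
  rw [show (3 : ℝ) / 2 = 1 / 2 + 1 by norm_num, rpow_add' hu (by norm_num), rpow_one,
    ← sqrt_eq_rpow]

theorem hasDerivAt_div_sqrt_affine (c α β x : ℝ) (hx : 0 < α * x + β) :
    HasDerivAt (fun y => c / √(α * y + β)) (-(α / 2) * (c / (α * x + β) ^ ((3 : ℝ) / 2))) x := by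
  have hlin : HasDerivAt (fun y => α * y + β) α x := by
    simpa using ((hasDerivAt_id x).const_mul α).add_const β
  refine ((hasDerivAt_const x c).div (hlin.sqrt hx.ne') (sqrt_pos.2 hx).ne').congr_deriv ?_
  rw [rpow_three_halves_eq_sqrt_mul hx.le]
  have hsq : √(α * x + β) ^ 2 = α * x + β := sq_sqrt hx.le
  field_simp
  rw [hsq]
  ring

/-- `-(t²/2) · aₖ / (t² bₖ + 1)^{3/2}` is the partial derivative of the objective in `bₖ`, so this
is the Karush–Kuhn–Tucker condition at a coordinate carrying positive mass. -/
theorem div_rpow_le_of_isMinOn {ι : Type*} [Fintype ι] {a b : ι → ℝ} {t : ℝ} (ht : t ≠ 0)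
    (hmin : IsMinOn (fun c => ∑ j, a j / √(t ^ 2 * c j + 1)) (stdSimplex ℝ ι) b)
    (hb : b ∈ stdSimplex ℝ ι) {k : ι} (hk : 0 < b k) (m : ι) :
    a m / (t ^ 2 * b m + 1) ^ ((3 : ℝ) / 2) ≤ a k / (t ^ 2 * b k + 1) ^ ((3 : ℝ) / 2) := by
  rcases eq_or_ne k m with rfl | hkm
  · exact le_rfl
  have ht2 : 0 < t ^ 2 := by positivity
  have hbm := hb.1 m
  have hs : b k + b m - b k = b m := add_sub_cancel_left _ _
  have hderiv_k := hasDerivAt_div_sqrt_affine (a k) (t ^ 2) 1 (b k) (by positivity)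
  have hderiv_m := (hasDerivAt_div_sqrt_affine (a m) (t ^ 2) 1 (b k + b m - b k)
    (by rw [hs]; positivity)).comp_const_sub (b k + b m) (b k)
  rw [hs] at hderiv_m
  have hle := (hderiv_k.add hderiv_m).nonpos_of_isMinOn_Icc
    (hmin.exchange_stdSimplex (f := fun j y => a j / √(t ^ 2 * y + 1)) hb hkm)
    ⟨hk, le_add_of_nonneg_right hbm⟩
  nlinarith

theorem eq_rpow_inv_mul_of_div_rpow_eq {p a c u v : ℝ} (hp : p ≠ 0) (ha : 0 ≤ a) (hc : 0 < c)
    (hu : 0 < u) (hv : 0 < v) (h : a / u ^ p = c / v ^ p) : u = (a / c) ^ p⁻¹ * v := by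
  have hup : u ^ p = a / c * v ^ p := by
    have hup := rpow_pos_of_pos hu p
    have hvp := rpow_pos_of_pos hv p
    field_simp at h ⊢
    linarith
  calc u = (u ^ p) ^ p⁻¹ := (rpow_rpow_inv hu.le hp).symm
    _ = (a / c) ^ p⁻¹ * v := by
      rw [hup, mul_rpow (by positivity) (by positivity), rpow_rpow_inv hv.le hp]

theorem stmt_12_general {K : ℕ} (a : Fin K → ℝ) (ha : ∀ k, 0 < a k)
    (t : ℝ) (ht : t ≠ 0)
    (R : (Fin K → ℝ) → ℝ)
    (hR : ∀ b, R b = (1 / K : ℝ) * ∑ k, a k / Real.sqrt (t ^ 2 * b k + 1))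
    (A : ℝ) (hub : ∀ k, a k ≤ A) (hex : ∃ k, a k = A)
    (bstar : Fin K → ℝ)
    (hmem : (∀ k, 0 ≤ bstar k) ∧ ∑ k, bstar k = 1)
    (hmin : ∀ b : Fin K → ℝ, (∀ k, 0 ≤ b k) → (∑ k, b k = 1) → R bstar ≤ R b)
    (B : ℝ) (hB : ∀ m, a m = A → bstar m = B) :
    ∀ k : Fin K, 0 < bstar k →
      a k / (t ^ 2 * bstar k + 1) ^ ((3 : ℝ) / 2) = A / (t ^ 2 * B + 1) ^ ((3 : ℝ) / 2) ∧
      bstar k = (1 / t ^ 2) * ((a k / A) ^ ((2 : ℝ) / 3) * (t ^ 2 * B + 1) - 1) := by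
  obtain ⟨m, hm⟩ := hex
  have hA : 0 < A := (ha m).trans_le (hub m)
  have hminOn : IsMinOn (fun c => ∑ j, a j / √(t ^ 2 * c j + 1)) (stdSimplex ℝ (Fin K)) bstar :=
    fun b hb => by
      have hK : (0 : ℝ) < 1 / K := by have := m.pos; positivity
      simpa only [mem_ofPred_eq, hR, mul_le_mul_iff_right₀ hK] using hmin b hb.1 hb.2
  intro k hk
  have hmk := div_rpow_le_of_isMinOn ht hminOn hmem hk m
  rw [hm, hB m hm] at hmk
  have hBpos : 0 < B := by
    refine (hB m hm ▸ hmem.1 m).lt_of_ne fun hB0 => ?_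
    have hu : 1 < t ^ 2 * bstar k + 1 := by
      have : 0 < t ^ 2 * bstar k := mul_pos (by positivity) hk
      linarith
    have := div_lt_self (ha k) (one_lt_rpow hu (by norm_num : (0 : ℝ) < 3 / 2))
    rw [← hB0] at hmk
    simp only [mul_zero, zero_add, one_rpow, div_one] at hmk
    linarith [hub k]
  have hkm := div_rpow_le_of_isMinOn ht hminOn hmem (hB m hm ▸ hBpos) k
  rw [hm, hB m hm] at hkm
  have hstat := le_antisymm hkm hmk
  refine ⟨hstat, ?_⟩
  have hu := eq_rpow_inv_mul_of_div_rpow_eq (by norm_num) (ha k).le hA (by positivity)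
    (by positivity) hstat
  rw [show ((3 : ℝ) / 2)⁻¹ = 2 / 3 by norm_num] at hu
  rw [← hu]
  field_simp
  ring

/-- stationarity formula for positive coordinates of the minimizer.  Let `b*`
minimize `R(b) = (1/K)·∑ₖ aₖ/√(t²bₖ+1)` over the probability simplex, and let `B` be the common
value of `b*` on the set of indices where `a` attains its maximum `A`.  Then for every `k` with
`b*ₖ > 0`, `aₖ/(t²b*ₖ+1)^{3/2} = A/(t²B+1)^{3/2}`, equivalently
`b*ₖ = (1/t²)·((aₖ/A)^{2/3}·(t²B+1) − 1)`. -/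
theorem stmt_12 {K : ℕ} (hK : 0 < K) (a : Fin K → ℝ) (ha : ∀ k, 0 < a k)
    (t : ℝ) (ht : t ≠ 0)
    (R : (Fin K → ℝ) → ℝ)
    (hR : ∀ b, R b = (1 / K : ℝ) * ∑ k, a k / Real.sqrt (t ^ 2 * b k + 1))
    (A : ℝ) (hub : ∀ k, a k ≤ A) (hex : ∃ k, a k = A)
    (bstar : Fin K → ℝ)
    (hmem : (∀ k, 0 ≤ bstar k) ∧ ∑ k, bstar k = 1)
    (hmin : ∀ b : Fin K → ℝ, (∀ k, 0 ≤ b k) → (∑ k, b k = 1) → R bstar ≤ R b)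
    (B : ℝ) (hB : ∀ m, a m = A → bstar m = B) :
    ∀ k : Fin K, 0 < bstar k →
      a k / (t ^ 2 * bstar k + 1) ^ ((3 : ℝ) / 2) = A / (t ^ 2 * B + 1) ^ ((3 : ℝ) / 2) ∧
      bstar k = (1 / t ^ 2) * ((a k / A) ^ ((2 : ℝ) / 3) * (t ^ 2 * B + 1) - 1) :=
  stmt_12_general a ha t ht R hR A hub hex bstar hmem hmin B hB
end
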